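/- Fix 0 < δ < 1/2 and C > 0. Then sup_{0 < x' ≤ 1} ∫₀^{x'} e^{−p(x'² − x²)} / (x'² − x²)^δ dx → 0 as p → ∞; in fact this supremum is bounded by C' p^{−ε} for some ε > 0 and constant C' depending only on δ. -/
import Mathlib


open Filter

/-- `e^{-s} ≤ s^{-β}` for `s > 0` and `0 ≤ β ≤ 1`. -/
lemma exp_neg_le_rpow_neg {s β : ℝ} (hs : 0 < s) (hβ0 : 0 ≤ β) (hβ1 : β ≤ 1) :
    Real.exp (-s) ≤ s ^ (-β) := by
  rw [Real.rpow_neg hs.le, Real.exp_neg]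
  have h1 : s ^ β ≤ Real.exp s := by
    rcases le_or_gt s 1 with h | h
    · exact (Real.rpow_le_one hs.le h hβ0).trans (Real.one_le_exp hs.le)
    · calc s ^ β ≤ s ^ (1 : ℝ) := Real.rpow_le_rpow_of_exponent_le h.le hβ1
        _ = s := Real.rpow_one s
        _ ≤ Real.exp s := by linarith [Real.add_one_le_exp s]
  exact inv_anti₀ (Real.rpow_pos_of_pos hs β) h1

/-- The key uniform pointwise bound on the integral. -/
lemma kernel_integral_bound (δ : ℝ) (hδ0 : 0 < δ) (hδ : δ < 1 / 2) {p : ℝ} (hp : 1 ≤ p)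
    {x' : ℝ} (hx'0 : 0 < x') :
    (∫ x in (0:ℝ)..x', Real.exp (-p * (x' ^ 2 - x ^ 2)) / (x' ^ 2 - x ^ 2) ^ δ)
      ≤ 2 * p ^ (-(1 / 2 - δ)) := by
  have hp0 : (0:ℝ) < p := lt_of_lt_of_le one_pos hp
  set β : ℝ := 1 / 2 - δ with hβ
  have hβ0 : 0 < β := by simp only [hβ]; linarith
  have hβ1 : β ≤ 1 := by simp only [hβ]; linarith
  -- the comparison function
  set G : ℝ → ℝ := fun x => p ^ (-β) * (x' ^ (-(1/2) : ℝ) * (x' - x) ^ (-(1/2) : ℝ)) with hG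
  have hGint : IntervalIntegrable G MeasureTheory.volume 0 x' := by
    apply IntervalIntegrable.const_mul
    apply IntervalIntegrable.const_mul
    have h := (intervalIntegral.intervalIntegrable_rpow' (a := x') (b := 0)
      (r := (-(1/2) : ℝ)) (by norm_num)).comp_sub_left x'
    simpa using h
  have hle : (∫ x in (0:ℝ)..x', Real.exp (-p * (x' ^ 2 - x ^ 2)) / (x' ^ 2 - x ^ 2) ^ δ)
      ≤ ∫ x in (0:ℝ)..x', G x := by
    rw [intervalIntegral.integral_of_le hx'0.le, intervalIntegral.integral_of_le hx'0.le]
    apply MeasureTheory.integral_mono_of_nonneg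
    · filter_upwards [MeasureTheory.ae_restrict_mem measurableSet_Ioc] with x hx
      have ht : 0 ≤ x' ^ 2 - x ^ 2 := by nlinarith [hx.1, hx.2]
      exact div_nonneg (Real.exp_pos _).le (Real.rpow_nonneg ht δ)
    · exact hGint.1
    · filter_upwards [MeasureTheory.ae_restrict_mem measurableSet_Ioc] with x hx
      rcases eq_or_lt_of_le hx.2 with hxx | hxx
      · have h0 : x' ^ 2 - x ^ 2 = 0 := by rw [hxx]; ring
        have h1 : x' - x = 0 := by rw [hxx]; ring
        simp [hG, h0, h1, Real.zero_rpow hδ0.ne', Real.zero_rpow (by norm_num : (-(1/2):ℝ) ≠ 0)]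
      · have ht : 0 < x' ^ 2 - x ^ 2 := by nlinarith [hx.1]
        set t : ℝ := x' ^ 2 - x ^ 2 with htdef
        have hpt : 0 < p * t := mul_pos hp0 ht
        have step1 : Real.exp (-(p * t)) ≤ (p * t) ^ (-β) :=
          exp_neg_le_rpow_neg hpt hβ0.le hβ1
        have hx'x : 0 < x' * (x' - x) := mul_pos hx'0 (by linarith)
        have hx'xt : x' * (x' - x) ≤ t := by simp only [htdef]; nlinarith [hx.1]
        calc Real.exp (-p * t) / t ^ δ = Real.exp (-(p * t)) * t ^ (-δ) := by
              rw [Real.rpow_neg ht.le, neg_mul, div_eq_mul_inv]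
          _ ≤ (p * t) ^ (-β) * t ^ (-δ) := by
              apply mul_le_mul_of_nonneg_right step1 (Real.rpow_nonneg ht.le _)
          _ = p ^ (-β) * (t ^ (-β) * t ^ (-δ)) := by
              rw [Real.mul_rpow hp0.le ht.le]; ring
          _ = p ^ (-β) * t ^ (-(1/2) : ℝ) := by
              rw [← Real.rpow_add ht, show -β + -δ = (-(1/2):ℝ) from by rw [hβ]; ring]
          _ ≤ p ^ (-β) * (x' * (x' - x)) ^ (-(1/2) : ℝ) := by
              apply mul_le_mul_of_nonneg_left
                (Real.rpow_le_rpow_of_nonpos hx'x hx'xt (by norm_num))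
                (Real.rpow_nonneg hp0.le _)
          _ = G x := by
              rw [hG, Real.mul_rpow hx'0.le (by linarith [hxx] : (0:ℝ) ≤ x' - x)]
  have hGval : (∫ x in (0:ℝ)..x', G x) = 2 * p ^ (-β) := by
    have h1 : (∫ x in (0:ℝ)..x', (x' - x) ^ (-(1/2) : ℝ)) = 2 * x' ^ ((1:ℝ)/2) := by
      have h2 := intervalIntegral.integral_comp_sub_left (a := 0) (b := x')
        (fun u : ℝ => u ^ (-(1/2) : ℝ)) x'
      simp only [sub_zero, sub_self] at h2
      rw [h2, integral_rpow (Or.inl (by norm_num))]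
      rw [Real.zero_rpow (by norm_num : (-(1/2) : ℝ) + 1 ≠ 0)]
      norm_num
      ring
    rw [hG]
    rw [intervalIntegral.integral_const_mul, intervalIntegral.integral_const_mul, h1]
    rw [show x' ^ (-(1/2) : ℝ) * (2 * x' ^ ((1:ℝ)/2)) = 2 * (x' ^ (-(1/2) : ℝ) * x' ^ ((1:ℝ)/2))
      by ring, ← Real.rpow_add hx'0]
    norm_num
    ring
  calc (∫ x in (0:ℝ)..x', Real.exp (-p * (x' ^ 2 - x ^ 2)) / (x' ^ 2 - x ^ 2) ^ δ)
      ≤ ∫ x in (0:ℝ)..x', G x := hle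
    _ = 2 * p ^ (-β) := hGval
    _ = 2 * p ^ (-(1/2 - δ)) := by rw [hβ]

/-- For `0 < δ < 1/2`, the supremum over `0 < x' ≤ 1` of
`∫₀^{x'} e^{−p(x'²−x²)} (x'²−x²)^{−δ} dx` tends to `0` as `p → ∞`, with a polynomial
rate `C' p^{−ε}`. -/
theorem kernel_sup_tendsto_zero (δ : ℝ) (hδ0 : 0 < δ) (hδ : δ < 1 / 2) :
    Tendsto (fun p : ℝ => ⨆ x' : Set.Ioc (0:ℝ) 1,
        ∫ x in (0:ℝ)..(x' : ℝ), Real.exp (-p * ((x' : ℝ) ^ 2 - x ^ 2))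
          / ((x' : ℝ) ^ 2 - x ^ 2) ^ δ) atTop (nhds 0) ∧
    ∃ ε > (0:ℝ), ∃ C' > (0:ℝ), ∀ p : ℝ, 1 ≤ p →
      (⨆ x' : Set.Ioc (0:ℝ) 1,
        ∫ x in (0:ℝ)..(x' : ℝ), Real.exp (-p * ((x' : ℝ) ^ 2 - x ^ 2))
          / ((x' : ℝ) ^ 2 - x ^ 2) ^ δ) ≤ C' * p ^ (-ε) := by
  set ε : ℝ := 1 / 2 - δ with hε
  have hε0 : 0 < ε := by simp only [hε]; linarith
  have key : ∀ p : ℝ, 1 ≤ p → ∀ x' : Set.Ioc (0:ℝ) 1,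
      (∫ x in (0:ℝ)..(x' : ℝ), Real.exp (-p * ((x' : ℝ) ^ 2 - x ^ 2))
        / ((x' : ℝ) ^ 2 - x ^ 2) ^ δ) ≤ 2 * p ^ (-ε) :=
    fun p hp x' => kernel_integral_bound δ hδ0 hδ hp x'.2.1
  have hsup : ∀ p : ℝ, 1 ≤ p → (⨆ x' : Set.Ioc (0:ℝ) 1,
      ∫ x in (0:ℝ)..(x' : ℝ), Real.exp (-p * ((x' : ℝ) ^ 2 - x ^ 2))
        / ((x' : ℝ) ^ 2 - x ^ 2) ^ δ) ≤ 2 * p ^ (-ε) :=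
    fun p hp => ciSup_le (key p hp)
  have hnonneg : ∀ p : ℝ, 1 ≤ p → 0 ≤ (⨆ x' : Set.Ioc (0:ℝ) 1,
      ∫ x in (0:ℝ)..(x' : ℝ), Real.exp (-p * ((x' : ℝ) ^ 2 - x ^ 2))
        / ((x' : ℝ) ^ 2 - x ^ 2) ^ δ) := by
    intro p hp
    have hbdd : BddAbove (Set.range fun x' : Set.Ioc (0:ℝ) 1 =>
        ∫ x in (0:ℝ)..(x' : ℝ), Real.exp (-p * ((x' : ℝ) ^ 2 - x ^ 2))
          / ((x' : ℝ) ^ 2 - x ^ 2) ^ δ) := by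
      refine ⟨2 * p ^ (-ε), ?_⟩
      rintro y ⟨x', rfl⟩
      exact key p hp x'
    refine le_trans ?_ (le_ciSup hbdd ⟨1, by norm_num⟩)
    show (0:ℝ) ≤ ∫ x in (0:ℝ)..(1:ℝ), Real.exp (-p * ((1:ℝ) ^ 2 - x ^ 2))
      / ((1:ℝ) ^ 2 - x ^ 2) ^ δ
    apply intervalIntegral.integral_nonneg (by norm_num)
    intro x hx
    have ht : (0:ℝ) ≤ (1:ℝ) ^ 2 - x ^ 2 := by nlinarith [hx.1, hx.2]
    exact div_nonneg (Real.exp_pos _).le (Real.rpow_nonneg ht δ)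
  constructor
  · apply squeeze_zero' (eventually_atTop.2 ⟨1, fun p hp => hnonneg p hp⟩)
      (eventually_atTop.2 ⟨1, fun p hp => hsup p hp⟩)
    have h := (tendsto_rpow_neg_atTop hε0).const_mul (2:ℝ)
    simpa using h
  · exact ⟨ε, hε0, 2, two_pos, hsup⟩
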